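/- arXiv:2302.09710 — 2 statements merged into one kernel-verified Lean document; each statement's English description precedes it below -/
import Mathlib

section
/- Symmetry identity: for all m, n ∈ ℕ and λ ∈ ℝ, ∑_{j=0}^m [m j]_λ · ⟨1+mλ⟩_{n,λ} = ∑_{j=0}^n [n j]_λ · ⟨1+nλ⟩_{m,λ}. -/
/-- λ-rising factorial ⟨x⟩_{n,λ} = ∏_{i<n} (x + iλ). -/
noncomputable def lrise (lam x : ℝ) (n : ℕ) : ℝ :=
  ∏ i ∈ Finset.range n, (x + (i : ℝ) * lam)

/-- Unsigned λ-Stirling numbers of the first kind: coefficient of x^k in ⟨x⟩_{n,λ}. -/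
noncomputable def lstir (lam : ℝ) (n k : ℕ) : ℝ :=
  (∏ i ∈ Finset.range n, (Polynomial.X + Polynomial.C ((i : ℝ) * lam))).coeff k

lemma lstir_sum (lam : ℝ) (m : ℕ) :
    ∑ j ∈ Finset.range (m + 1), lstir lam m j = lrise lam 1 m := by
  set P := ∏ i ∈ Finset.range m, (Polynomial.X + Polynomial.C ((i : ℝ) * lam)) with hP
  have hdeg : P.natDegree < m + 1 := by
    have : P.natDegree ≤ m := by
      apply le_trans (Polynomial.natDegree_prod_le _ _)
      apply le_trans (Finset.sum_le_card_nsmul _ _ 1 ?_)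
      · simp
      · intro i _
        exact (Polynomial.natDegree_X_add_C _).le
    omega
  have heval : P.eval 1 = ∑ j ∈ Finset.range (m + 1), P.coeff j * 1 ^ j :=
    Polynomial.eval_eq_sum_range' hdeg 1
  simp only [one_pow, mul_one] at heval
  have : P.eval 1 = lrise lam 1 m := by
    simp [hP, Polynomial.eval_prod, lrise]
  rw [← this, heval]
  rfl

lemma lrise_add (lam : ℝ) (m n : ℕ) :
    lrise lam 1 (m + n) = lrise lam 1 m * lrise lam (1 + (m : ℝ) * lam) n := by
  rw [lrise, Finset.prod_range_add]
  congr 1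
  apply Finset.prod_congr rfl
  intro i _
  push_cast
  ring

theorem stmt13 (lam : ℝ) (m n : ℕ) :
    ∑ j ∈ Finset.range (m + 1), lstir lam m j * lrise lam (1 + (m : ℝ) * lam) n
      = ∑ j ∈ Finset.range (n + 1), lstir lam n j * lrise lam (1 + (n : ℝ) * lam) m := by
  rw [← Finset.sum_mul, ← Finset.sum_mul, lstir_sum, lstir_sum,
    ← lrise_add, ← lrise_add, add_comm]
end

section
/- For all nonnegative integers n, k and λ ∈ ℝ: [n+1 k+1]_{1,λ} = ∑_{l=0}^{n−k} C(n,l) · ⟨1⟩_{l,λ} · [n−l k]_λ, where [n+1 k+1]_{1,λ} denotes the λ-1-Stirling number of the first kind (coefficient of x^k in ⟨x+1⟩_{n,λ}). -/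
/-- λ-r-Stirling numbers of the first kind (r = 1): coefficient of x^k in ⟨x+1⟩_{n,λ}. -/
noncomputable def lstir1 (lam : ℝ) (n k : ℕ) : ℝ :=
  (∏ i ∈ Finset.range n, (Polynomial.X + Polynomial.C (1 + (i : ℝ) * lam))).coeff k

open Polynomial Finset

noncomputable def Qpoly (lam : ℝ) (n : ℕ) : Polynomial ℝ :=
  ∏ i ∈ Finset.range n, (Polynomial.X + Polynomial.C ((i : ℝ) * lam))

lemma Qpoly_natDegree (lam : ℝ) (n : ℕ) : (Qpoly lam n).natDegree = n := by
  unfold Qpoly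
  rw [Polynomial.natDegree_prod]
  · rw [Finset.sum_congr rfl fun (i : ℕ) _ => Polynomial.natDegree_X_add_C ((i : ℝ) * lam)]
    simp
  · intro i _
    exact (Polynomial.monic_X_add_C _).ne_zero

lemma lrise_succ (lam : ℝ) (l : ℕ) :
    lrise lam 1 (l + 1) = lrise lam 1 l * (1 + (l : ℝ) * lam) := by
  simp [lrise, Finset.prod_range_succ]

lemma key (lam : ℝ) (n : ℕ) :
    (∏ i ∈ Finset.range n, (Polynomial.X + Polynomial.C (1 + (i : ℝ) * lam))) =
      ∑ l ∈ Finset.range (n + 1),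
        Polynomial.C ((n.choose l : ℝ) * lrise lam 1 l) * Qpoly lam (n - l) := by
  induction n with
  | zero => simp [Qpoly, lrise]
  | succ n ih =>
    rw [Finset.prod_range_succ, ih, Finset.sum_mul]
    have hsplit : ∀ l ∈ Finset.range (n + 1),
        Polynomial.C ((n.choose l : ℝ) * lrise lam 1 l) * Qpoly lam (n - l) *
            (Polynomial.X + Polynomial.C (1 + (n : ℝ) * lam))
          = Polynomial.C ((n.choose l : ℝ) * lrise lam 1 l) * Qpoly lam (n + 1 - l)
            + Polynomial.C ((n.choose l : ℝ) * lrise lam 1 (l + 1)) * Qpoly lam (n - l) := by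
      intro l hl
      have hl' : l ≤ n := Nat.lt_succ_iff.mp (Finset.mem_range.mp hl)
      have h1 : Qpoly lam (n + 1 - l)
          = Qpoly lam (n - l) * (Polynomial.X + Polynomial.C (((n - l : ℕ) : ℝ) * lam)) := by
        rw [show n + 1 - l = (n - l) + 1 by omega]
        simp [Qpoly, Finset.prod_range_succ]
      have h3 : (Polynomial.X + Polynomial.C (1 + (n : ℝ) * lam))
          = (Polynomial.X + Polynomial.C (((n - l : ℕ) : ℝ) * lam))
            + Polynomial.C (1 + (l : ℝ) * lam) := by
        rw [add_assoc, ← Polynomial.C_add]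
        congr 2
        push_cast [Nat.cast_sub hl']
        ring
      rw [h3, h1, lrise_succ]
      simp only [map_mul]
      ring
    rw [Finset.sum_congr rfl hsplit, Finset.sum_add_distrib]
    rw [Finset.sum_range_succ' (fun l => Polynomial.C ((n.choose l : ℝ) * lrise lam 1 l) *
      Qpoly lam (n + 1 - l))]
    rw [Finset.sum_range_succ' (fun l => Polynomial.C (((n+1).choose l : ℝ) * lrise lam 1 l) *
      Qpoly lam (n + 1 - l))]
    have hend : ∑ l ∈ Finset.range (n + 1),
        Polynomial.C (((n + 1).choose (l + 1) : ℝ) * lrise lam 1 (l + 1)) *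
          Qpoly lam (n + 1 - (l + 1))
        = (∑ l ∈ Finset.range n,
            Polynomial.C ((n.choose (l + 1) : ℝ) * lrise lam 1 (l + 1)) * Qpoly lam (n + 1 - (l + 1)))
          + ∑ l ∈ Finset.range (n + 1),
            Polynomial.C ((n.choose l : ℝ) * lrise lam 1 (l + 1)) * Qpoly lam (n - l) := by
      have : ∀ l ∈ Finset.range (n + 1),
          Polynomial.C (((n + 1).choose (l + 1) : ℝ) * lrise lam 1 (l + 1)) *
            Qpoly lam (n + 1 - (l + 1))
          = Polynomial.C ((n.choose (l + 1) : ℝ) * lrise lam 1 (l + 1)) * Qpoly lam (n + 1 - (l + 1))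
            + Polynomial.C ((n.choose l : ℝ) * lrise lam 1 (l + 1)) * Qpoly lam (n - l) := by
        intro l hl
        rw [Nat.choose_succ_succ']
        push_cast
        rw [add_mul, Polynomial.C_add, add_mul]
        ring
      rw [Finset.sum_congr rfl this, Finset.sum_add_distrib]
      congr 1
      rw [Finset.sum_range_succ]
      simp
    rw [hend]
    simp only [Nat.choose_zero_right]
    ring

theorem stmt19 (lam : ℝ) (n k : ℕ) :
    lstir1 lam n k
      = ∑ l ∈ Finset.range (n - k + 1),
          (n.choose l : ℝ) * lrise lam 1 l * lstir lam (n - l) k := by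
  have h := key lam n
  have h2 : lstir1 lam n k
      = ∑ l ∈ Finset.range (n + 1),
          (n.choose l : ℝ) * lrise lam 1 l * lstir lam (n - l) k := by
    unfold lstir1 lstir
    rw [h, Polynomial.finset_sum_coeff]
    refine Finset.sum_congr rfl fun l _ => ?_
    rw [Polynomial.coeff_C_mul]
    unfold Qpoly
    ring
  rw [h2]
  symm
  apply Finset.sum_subset
  · intro x hx
    simp only [Finset.mem_range] at *
    omega
  · intro l hl hnl
    simp only [Finset.mem_range] at hl hnl
    have hdeg : (Qpoly lam (n - l)).natDegree < k := by
      rw [Qpoly_natDegree]; omega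
    have hc := Polynomial.coeff_eq_zero_of_natDegree_lt hdeg
    unfold Qpoly at hc
    unfold lstir
    rw [hc]
    ring
end
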